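/- arXiv:1811.01252 — 3 statements merged into one kernel-verified Lean document; each statement's English description precedes it below -/
import Mathlib

section
/- Let F be a field, p ∈ F[X] monic irreducible, and K = F[X]/(p) the corresponding field extension, regarded as an F-vector space. Let x_p ∈ End_F(K) be the F-linear operator of multiplication by the class of X. If T ∈ End_F(K) satisfies [T, x_p] ∈ K (i.e. the commutator T x_p − x_p T equals multiplication by some element y ∈ K), then T is itself multiplication by an element of K; in particular the subring of multiplication operators K ⊂ End_F(K) is self-normalizing. -/
/-- Self-normalization of the multiplication subring `K ⊂ End_F(K)` where
`K = F[X]/(p)` for `p` monic irreducible over a field `F` of characteristic zero: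
if `T x_p - x_p T` is multiplication by some `y ∈ K`, then `T` is itself
multiplication by an element of `K`. -/
theorem mul_subring_self_normalizing {F : Type*} [Field F] [CharZero F]
    (p : Polynomial F) (hmonic : p.Monic) (hirr : Irreducible p)
    (T : AdjoinRoot p →ₗ[F] AdjoinRoot p) (y : AdjoinRoot p)
    (h : T ∘ₗ LinearMap.mulLeft F (AdjoinRoot.root p)
        - LinearMap.mulLeft F (AdjoinRoot.root p) ∘ₗ T = LinearMap.mulLeft F y) :
    ∃ z : AdjoinRoot p, T = LinearMap.mulLeft F z := by
  haveI : Fact (Irreducible p) := ⟨hirr⟩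
  set x := AdjoinRoot.root p with hx
  -- pointwise form of the hypothesis
  have hcomm : ∀ a : AdjoinRoot p, T (x * a) = x * T a + y * a := by
    intro a
    have h1 := congrFun (congrArg DFunLike.coe h) a
    simp only [LinearMap.sub_apply, LinearMap.comp_apply, LinearMap.mulLeft_apply] at h1
    linear_combination h1
  -- key formula by polynomial induction
  have key : ∀ q : Polynomial F,
      T (AdjoinRoot.mk p q) =
        AdjoinRoot.mk p q * T 1 + AdjoinRoot.mk p q.derivative * y := by
    intro q
    induction q using Polynomial.induction_on with
    | C a =>
        simp only [Polynomial.derivative_C, map_zero, zero_mul, add_zero]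
        have : (AdjoinRoot.mk p) (Polynomial.C a) = a • (1 : AdjoinRoot p) := by
          rw [AdjoinRoot.mk_C, Algebra.smul_def, mul_one]
          rfl
        rw [this, map_smul, smul_mul_assoc, one_mul]
    | add f g hf hg =>
        simp only [map_add, Polynomial.derivative_add] at *
        rw [hf, hg]; ring
    | monomial n a ih =>
        have hrw : Polynomial.C a * Polynomial.X ^ (n + 1)
            = Polynomial.X * (Polynomial.C a * Polynomial.X ^ n) := by ring
        rw [hrw]
        have hmul : (AdjoinRoot.mk p) (Polynomial.X * (Polynomial.C a * Polynomial.X ^ n))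
            = x * (AdjoinRoot.mk p) (Polynomial.C a * Polynomial.X ^ n) := by
          rw [map_mul, AdjoinRoot.mk_X]
        rw [hmul, hcomm, ih]
        simp only [Polynomial.derivative_mul, Polynomial.derivative_X, Polynomial.derivative_C,
          map_add, map_mul, AdjoinRoot.mk_X, map_zero, map_one, zero_mul, mul_zero, mul_one]
        ring
  -- deduce y = 0 from p(x) = 0
  have hy : y = 0 := by
    have hp0 : (AdjoinRoot.mk p) p = 0 := AdjoinRoot.mk_self
    have h0 := key p
    rw [hp0, map_zero, zero_mul, zero_add] at h0
    have hdy : (AdjoinRoot.mk p) p.derivative * y = 0 := h0.symm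
    have hpne : p ≠ 0 := hirr.ne_zero
    have hdne : (AdjoinRoot.mk p) p.derivative ≠ 0 := by
      rw [Ne, AdjoinRoot.mk_eq_zero]
      intro hdvd
      have hd0 : p.derivative ≠ 0 := by
        intro hzero
        have hdeg : p.natDegree ≠ 0 := hirr.natDegree_pos.ne'
        have := Polynomial.natDegree_eq_zero_of_derivative_eq_zero hzero
        exact hdeg this
      have := Polynomial.degree_le_of_dvd hdvd hd0
      exact absurd this (not_le.mpr (Polynomial.degree_derivative_lt hpne))
    rcases mul_eq_zero.mp hdy with h' | h'
    · exact absurd h' hdne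
    · exact h'
  -- now T commutes, so T = mulLeft (T 1)
  refine ⟨T 1, ?_⟩
  ext a
  obtain ⟨q, rfl⟩ := AdjoinRoot.mk_surjective a
  rw [LinearMap.mulLeft_apply, key q, hy, mul_zero, add_zero, mul_comm]
end

section
/- Let p, q be distinct monic irreducible polynomials over a field F, and let J(p, m) and J(q, n) be generalized Jordan blocks (block matrices with m, resp. n, diagonal blocks equal to the companion matrix of p, resp. q, and identity blocks on the superdiagonal). Then the only matrix Δ satisfying Δ J(q, m) = J(p, n) Δ is Δ = 0. -/
open Matrix Kronecker

/-- The `k×k` nilpotent Jordan block (upper shift matrix). -/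
def jordanShift (F : Type*) [Semiring F] (k : ℕ) : Matrix (Fin k) (Fin k) F :=
  fun i j => if (j : ℕ) = (i : ℕ) + 1 then 1 else 0

/-- The companion matrix of a monic polynomial `p` (1's on the subdiagonal,
last column `(-a_0, ..., -a_{d-1})ᵀ`). -/
def companionMatrix {F : Type*} [Field F] (p : Polynomial F) :
    Matrix (Fin p.natDegree) (Fin p.natDegree) F :=
  fun i j => (if (i : ℕ) = (j : ℕ) + 1 then 1 else 0)
    + (if (j : ℕ) = p.natDegree - 1 then -p.coeff (i : ℕ) else 0)

/-- The generalized Jordan block `J(p, n) = id_n ⊗ x_p + N_n ⊗ id_d`. -/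
noncomputable def genJordan {F : Type*} [Field F] (p : Polynomial F) (n : ℕ) :
    Matrix (Fin n × Fin p.natDegree) (Fin n × Fin p.natDegree) F :=
  (1 : Matrix (Fin n) (Fin n) F) ⊗ₖ companionMatrix p
    + jordanShift F n ⊗ₖ (1 : Matrix (Fin p.natDegree) (Fin p.natDegree) F)

/-!
If `Δ J(q, m) = J(p, n) Δ`, then `Δ f(J(q, m)) = f(J(p, n)) Δ` for every polynomial `f`.
In `J(p, n) = 1 ⊗ x_p + N ⊗ 1` the two summands commute and the second is nilpotent, so
`f(J(p, n))` differs from `1 ⊗ f(x_p)` by a nilpotent commuting with it. As `x_p` is the matrix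
of multiplication by the root in `F[X]/(p)`, we get `q(x_q) = 0`, and `q(x_p)` is invertible
because `F[X]/(p)` is a field in which `q ≠ 0`. Hence `q(J(q, m))^k = 0` for some `k` while
`q(J(p, n))^k` is invertible, and `q(J(p, n))^k Δ = Δ q(J(q, m))^k = 0` forces `Δ = 0`.
-/

open Polynomial

section NilpotentPerturbation

variable {F R : Type*} [CommRing F] [Ring R] [Algebra F R] {a b : R}

open scoped IsMulCommutative in
theorem Commute.isNilpotent_aeval_add_sub_aeval (hab : Commute a b) (hb : IsNilpotent b)
    (P : F[X]) : IsNilpotent (aeval (a + b) P - aeval a P) := by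
  let S := Algebra.adjoin F {a, b}
  have : IsMulCommutative S := Algebra.isMulCommutative_adjoin F (by
    rintro x (rfl | rfl) y (rfl | rfl)
    exacts [rfl, hab.eq, hab.symm.eq, rfl])
  let a' : S := ⟨a, Algebra.subset_adjoin (by simp)⟩
  let b' : S := ⟨b, Algebra.subset_adjoin (by simp)⟩
  have hb' : IsNilpotent b' := by
    obtain ⟨k, hk⟩ := hb
    exact ⟨k, Subtype.ext (by simpa [b'] using hk)⟩
  have := (isNilpotent_aeval_sub_of_isNilpotent_sub P (a := a' + b') (b := a')
    (by simpa using hb')).map S.val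
  simpa [aeval_algHom_apply, a', b'] using this

theorem Commute.isUnit_aeval_add (hab : Commute a b) (hb : IsNilpotent b) {P : F[X]}
    (ha : IsUnit (aeval a P)) : IsUnit (aeval (a + b) P) := by
  have hcomm : Commute (aeval (a + b) P) (aeval a P) := by
    have h : Commute (a + b) (aeval a P) :=
      Algebra.commute_of_mem_adjoin_singleton_of_commute (aeval_mem_adjoin_singleton F a)
        ((Commute.refl a).add_left hab.symm)
    exact Algebra.commute_of_mem_adjoin_singleton_of_commute
      (aeval_mem_adjoin_singleton F (a + b)) h.symm |>.symm
  rw [← add_sub_cancel (aeval a P) (aeval (a + b) P)]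
  exact (hab.isNilpotent_aeval_add_sub_aeval hb P).isUnit_add_left_of_commute ha
    (hcomm.sub_left (Commute.refl _))

end NilpotentPerturbation

section Kronecker

variable {R : Type*} [CommSemiring R] {m n : Type*} [Fintype m] [Fintype n]
  [DecidableEq m] [DecidableEq n]

theorem Matrix.commute_one_kronecker_kronecker_one (A : Matrix n n R) (B : Matrix m m R) :
    Commute ((1 : Matrix m m R) ⊗ₖ A) (B ⊗ₖ (1 : Matrix n n R)) := by
  simp [Commute, SemiconjBy, ← mul_kronecker_mul]

theorem IsNilpotent.kronecker_one {B : Matrix m m R} (hB : IsNilpotent B) :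
    IsNilpotent (B ⊗ₖ (1 : Matrix n n R)) := by
  simpa using hB.map ((kroneckerAlgEquiv m n R).toAlgHom.comp Algebra.TensorProduct.includeLeft)

theorem Matrix.mul_aeval_eq_aeval_mul {Δ : Matrix m n R} {A : Matrix n n R} {B : Matrix m m R}
    (h : Δ * A = B * Δ) (f : R[X]) : Δ * aeval A f = aeval B f * Δ := by
  induction f using Polynomial.induction_on with
  | C c => simp [Algebra.algebraMap_eq_smul_one]
  | add f g hf hg => simp [Matrix.mul_add, Matrix.add_mul, hf, hg]
  | monomial k c ih =>
    rw [pow_succ, ← mul_assoc, map_mul (aeval A), map_mul (aeval B), aeval_X, aeval_X,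
      ← Matrix.mul_assoc, ih, Matrix.mul_assoc, h, Matrix.mul_assoc]

end Kronecker

theorem jordanShift_pow_apply_eq_zero {F : Type*} [Semiring F] {k j : ℕ} {i l : Fin k}
    (h : (l : ℕ) < i + j) : (jordanShift F k ^ j) i l = 0 := by
  induction j generalizing l with
  | zero => exact one_apply_ne (Fin.ne_of_val_ne (by omega))
  | succ j ih =>
    rw [pow_succ, mul_apply]
    refine Finset.sum_eq_zero fun t _ => ?_
    by_cases ht : (t : ℕ) < i + j
    · rw [ih ht, zero_mul]
    · rw [jordanShift, if_neg (by omega), mul_zero]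

theorem isNilpotent_jordanShift (F : Type*) [Semiring F] (k : ℕ) :
    IsNilpotent (jordanShift F k) :=
  ⟨k, by ext i l; exact jordanShift_pow_apply_eq_zero (by omega)⟩

section GenJordan

variable {F : Type*} [Field F] {p q : F[X]}

theorem companionMatrix_eq_leftMulMatrix (hp : p.Monic) :
    companionMatrix p =
      Algebra.leftMulMatrix (AdjoinRoot.powerBasis hp.ne_zero).basis (AdjoinRoot.root p) := by
  rw [← AdjoinRoot.powerBasis_gen hp.ne_zero, PowerBasis.leftMulMatrix, PowerBasis.minpolyGen_eq,
    AdjoinRoot.minpoly_powerBasis_gen_of_monic hp]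
  ext i j
  change _ = if (j : ℕ) + 1 = p.natDegree then -p.coeff i else if (i : ℕ) = j + 1 then 1 else 0
  simp only [companionMatrix]
  have := i.isLt
  split_ifs <;> first | omega | simp

variable (n : ℕ)

noncomputable def oneKroneckerLeftMulMatrix (hp : p ≠ 0) :
    AdjoinRoot p →ₐ[F] Matrix (Fin n × Fin p.natDegree) (Fin n × Fin p.natDegree) F :=
  (kroneckerAlgEquiv (Fin n) (Fin p.natDegree) F).toAlgHom.comp <|
    Algebra.TensorProduct.includeRight.comp <|
      Algebra.leftMulMatrix (AdjoinRoot.powerBasis hp).basis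

theorem aeval_one_kronecker_companionMatrix (hp : p.Monic) (q : F[X]) :
    aeval ((1 : Matrix (Fin n) (Fin n) F) ⊗ₖ companionMatrix p) q =
      oneKroneckerLeftMulMatrix n hp.ne_zero (AdjoinRoot.mk p q) := by
  have : (1 : Matrix (Fin n) (Fin n) F) ⊗ₖ companionMatrix p =
      oneKroneckerLeftMulMatrix n hp.ne_zero (AdjoinRoot.root p) := by
    rw [companionMatrix_eq_leftMulMatrix hp]
    rfl
  rw [this, aeval_algHom_apply, AdjoinRoot.aeval_eq]

theorem isNilpotent_aeval_genJordan_self (hp : p.Monic) :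
    IsNilpotent (aeval (genJordan p n) p) := by
  have h := (commute_one_kronecker_kronecker_one (companionMatrix p) (jordanShift F n))
    |>.isNilpotent_aeval_add_sub_aeval (isNilpotent_jordanShift F n).kronecker_one p
  rwa [aeval_one_kronecker_companionMatrix n hp, AdjoinRoot.mk_self, map_zero, sub_zero] at h

theorem isUnit_aeval_genJordan (hp : p.Monic) (hpi : Irreducible p) (hpq : ¬p ∣ q) :
    IsUnit (aeval (genJordan p n) q) := by
  have := Fact.mk hpi
  refine (commute_one_kronecker_kronecker_one (companionMatrix p) (jordanShift F n))
    |>.isUnit_aeval_add (isNilpotent_jordanShift F n).kronecker_one ?_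
  rw [aeval_one_kronecker_companionMatrix n hp]
  exact (isUnit_iff_ne_zero.mpr (mt AdjoinRoot.mk_eq_zero.mp hpq)).map _

end GenJordan

/-- If `p ≠ q` are distinct monic irreducible polynomials, the only intertwiner
between the generalized Jordan blocks `J(q, m)` and `J(p, n)` is zero. -/
theorem genJordan_intertwiner_eq_zero_of_ne {F : Type*} [Field F]
    (p q : Polynomial F) (hpm : p.Monic) (hqm : q.Monic)
    (hpi : Irreducible p) (hqi : Irreducible q) (hne : p ≠ q) (m n : ℕ)
    (Δ : Matrix (Fin n × Fin p.natDegree) (Fin m × Fin q.natDegree) F)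
    (h : Δ * genJordan q m = genJordan p n * Δ) :
    Δ = 0 := by
  have hpq : ¬p ∣ q := fun hdvd ↦
    hne (eq_of_monic_of_associated hpm hqm (hpi.associated_of_dvd hqi hdvd))
  obtain ⟨k, hk⟩ := isNilpotent_aeval_genJordan_self m hqm
  have hunit : IsUnit (aeval (genJordan p n) (q ^ k)).det :=
    (isUnit_iff_isUnit_det _).mp <| by
      rw [map_pow]; exact (isUnit_aeval_genJordan n hpm hpi hpq).pow k
  have hzero : aeval (genJordan p n) (q ^ k) * Δ = 0 := by
    rw [← mul_aeval_eq_aeval_mul h, map_pow, hk, Matrix.mul_zero]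
  rw [← nonsing_inv_mul_cancel_left _ Δ hunit, hzero, Matrix.mul_zero]
end

section
/- Let p(X) = X^d + a_{d−1} X^{d−1} + ... + a_0 be a monic polynomial over a field F with companion matrix x_p (with 1's on the subdiagonal, last column (−a_0, ..., −a_{d−1})^T). Define μ_1, ..., μ_{d−1} recursively by μ_n = −a_{d−n} − Σ_{k=1}^{n−1} a_{d−n+k} μ_k. Then the symmetric Hankel-type matrix W_p with W_p[i][j] = 0 for i + j ≤ d, W_p[i][j] = 1 for i + j = d + 1, and W_p[i][j] = μ_{i+j−d−1} for i + j > d + 1, satisfies W_p x_p = x_p^T W_p. -/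
open Finset Matrix

/-- For a monic polynomial `p(X) = X^d + a_{d−1} X^{d−1} + ... + a_0` with
companion matrix `x_p` (1's on the subdiagonal, last column `-a_i`), and
`μ_1, ..., μ_{d−1}` defined by `μ_n = −a_{d−n} − Σ_{k=1}^{n−1} a_{d−n+k} μ_k`,
the symmetric Hankel-type matrix `W_p` with (1-indexed) entries `0` for
`i + j ≤ d`, `1` for `i + j = d + 1` and `μ_{i+j−d−1}` for `i + j > d + 1`
satisfies `W_p x_p = x_pᵀ W_p`. -/
theorem hankel_symmetrizes_companion {F : Type*} [Field F] (d : ℕ) (hd : 1 ≤ d)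
    (a : ℕ → F) (μ : ℕ → F)
    (hμ : ∀ nn, 1 ≤ nn → nn ≤ d - 1 →
      μ nn = -a (d - nn) - ∑ k ∈ Icc 1 (nn - 1), a (d - nn + k) * μ k) :
    let x : Matrix (Fin d) (Fin d) F := fun i j =>
      (if (i : ℕ) = (j : ℕ) + 1 then 1 else 0)
        + (if (j : ℕ) = d - 1 then -a (i : ℕ) else 0)
    let W : Matrix (Fin d) (Fin d) F := fun i j =>
      if (i : ℕ) + (j : ℕ) + 2 ≤ d then 0
      else if (i : ℕ) + (j : ℕ) + 1 = d then 1
      else μ ((i : ℕ) + (j : ℕ) + 1 - d)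
    W * x = xᵀ * W := by
  intro x W
  set W' : ℕ → ℕ → F := fun i j =>
    if i + j + 2 ≤ d then 0 else if i + j + 1 = d then 1 else μ (i + j + 1 - d)
    with hW'
  have hWsymm : ∀ i j, W' i j = W' j i := by
    intro i j
    simp only [hW', Nat.add_comm j i]
  -- value of the key sum
  have hS : ∀ j : ℕ, j < d →
      ∑ k ∈ Finset.range d, a k * W' k j
        = a (d - 1 - j) + ∑ m ∈ Icc 1 j, a (d - 1 - j + m) * μ m := by
    intro j hj
    rw [Finset.range_eq_Ico,
      ← Finset.sum_Ico_consecutive _ (Nat.zero_le (d - 1 - j)) (show d - 1 - j ≤ d by omega)]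
    have h1 : ∑ k ∈ Finset.Ico 0 (d - 1 - j), a k * W' k j = 0 := by
      apply Finset.sum_eq_zero
      intro k hk
      simp only [Finset.mem_Ico] at hk
      have hk2 : k + j + 2 ≤ d := by omega
      simp [hW', hk2]
    rw [h1, zero_add, Finset.sum_Ico_eq_sum_range]
    have hd' : d - (d - 1 - j) = j + 1 := by omega
    rw [hd', Finset.sum_range_succ']
    have hf0 : W' (d - 1 - j + 0) j = 1 := by
      simp only [hW']
      rw [if_neg (by omega), if_pos (by omega)]
    rw [hf0, mul_one, Nat.add_zero, add_comm]
    congr 1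
    rw [← Finset.Ico_add_one_right_eq_Icc, Finset.sum_Ico_eq_sum_range]
    apply Finset.sum_congr (by congr 1)
    intro i hi
    simp only [Finset.mem_range] at hi
    have hfi : W' (d - 1 - j + (i + 1)) j = μ (i + 1) := by
      simp only [hW']
      rw [if_neg (by omega), if_neg (by omega)]
      congr 1
      omega
    rw [hfi]
    congr 2 <;> omega
  have hSμ : ∀ j : ℕ, j < d - 1 →
      ∑ k ∈ Finset.range d, a k * W' k j = -μ (j + 1) := by
    intro j hj
    rw [hS j (by omega), hμ (j + 1) (by omega) (by omega)]
    have h1 : d - (j + 1) = d - 1 - j := by omega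
    have h2 : j + 1 - 1 = j := by omega
    rw [h1, h2]
    ring
  have e1 : ∀ i j : ℕ,
      ∑ k ∈ Finset.range d, W' i k * (if k = j + 1 then (1 : F) else 0)
        = if j + 1 < d then W' i (j + 1) else 0 := by
    intro i j
    simp only [mul_ite, mul_one, mul_zero]
    rw [Finset.sum_ite_eq']
    simp [Finset.mem_range]
  have e2 : ∀ i j : ℕ,
      ∑ k ∈ Finset.range d, (if k = i + 1 then (1 : F) else 0) * W' k j
        = if i + 1 < d then W' (i + 1) j else 0 := by
    intro i j
    simp only [ite_mul, one_mul, zero_mul]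
    rw [Finset.sum_ite_eq']
    simp [Finset.mem_range]
  have main : ∀ i j : ℕ, i < d → j < d →
      ∑ k ∈ Finset.range d,
          W' i k * ((if k = j + 1 then (1 : F) else 0) + (if j = d - 1 then -a k else 0))
        = ∑ k ∈ Finset.range d,
          ((if k = i + 1 then (1 : F) else 0) + (if i = d - 1 then -a k else 0)) * W' k j := by
    intro i j hi hj
    simp only [mul_add, add_mul, Finset.sum_add_distrib]
    rw [e1 i j, e2 i j]
    by_cases hjd : j = d - 1
    · by_cases hid : i = d - 1
      · subst hjd; subst hid
        simp only [if_neg (show ¬ (d - 1 + 1 < d) by omega), eq_self_iff_true, if_true,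
          zero_add]
        apply Finset.sum_congr rfl
        intro k _
        rw [hWsymm (d - 1) k, mul_comm]
      · -- j = d - 1, i < d - 1
        subst hjd
        simp only [if_neg (show ¬ (d - 1 + 1 < d) by omega),
          if_pos (show i + 1 < d by omega), eq_self_iff_true, if_true, if_neg hid,
          zero_mul, Finset.sum_const_zero, add_zero, zero_add]
        have hterm : ∑ k ∈ Finset.range d, W' i k * -a k
            = -∑ k ∈ Finset.range d, a k * W' k i := by
          rw [← Finset.sum_neg_distrib]
          apply Finset.sum_congr rfl
          intro k _
          rw [hWsymm i k]
          ring
        rw [hterm, hSμ i (by omega)]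
        have : W' (i + 1) (d - 1) = μ (i + 1) := by
          simp only [hW']
          rw [if_neg (by omega), if_neg (by omega)]
          congr 1
          omega
        rw [this, neg_neg]
    · by_cases hid : i = d - 1
      · -- i = d - 1, j < d - 1
        subst hid
        simp only [if_pos (show j + 1 < d by omega),
          if_neg (show ¬ (d - 1 + 1 < d) by omega), eq_self_iff_true, if_true, if_neg hjd,
          mul_zero, Finset.sum_const_zero, add_zero, zero_add]
        have hterm : ∑ k ∈ Finset.range d, -a k * W' k j
            = -∑ k ∈ Finset.range d, a k * W' k j := by
          rw [← Finset.sum_neg_distrib]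
          apply Finset.sum_congr rfl
          intro k _
          ring
        rw [hterm, hSμ j (by omega)]
        have : W' (d - 1) (j + 1) = μ (j + 1) := by
          simp only [hW']
          rw [if_neg (by omega), if_neg (by omega)]
          congr 1
          omega
        rw [this, neg_neg]
      · -- both interior
        simp only [if_pos (show j + 1 < d by omega), if_pos (show i + 1 < d by omega),
          if_neg hjd, if_neg hid, mul_zero, zero_mul, Finset.sum_const_zero, add_zero]
        simp only [hW']
        have h : i + (j + 1) = i + 1 + j := by omega
        rw [h]
  ext i j
  rw [Matrix.mul_apply, Matrix.mul_apply]
  simp only [Matrix.transpose_apply]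
  have lhs : ∑ k : Fin d, W i k * x k j
      = ∑ k ∈ Finset.range d,
          W' (i : ℕ) k * ((if k = (j : ℕ) + 1 then (1 : F) else 0)
            + (if (j : ℕ) = d - 1 then -a k else 0)) :=
    Fin.sum_univ_eq_sum_range
      (fun k => W' (i : ℕ) k * ((if k = (j : ℕ) + 1 then (1 : F) else 0)
        + (if (j : ℕ) = d - 1 then -a k else 0))) d
  have rhs : ∑ k : Fin d, x k i * W k j
      = ∑ k ∈ Finset.range d,
          ((if k = (i : ℕ) + 1 then (1 : F) else 0)
            + (if (i : ℕ) = d - 1 then -a k else 0)) * W' k (j : ℕ) :=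
    Fin.sum_univ_eq_sum_range
      (fun k => ((if k = (i : ℕ) + 1 then (1 : F) else 0)
        + (if (i : ℕ) = d - 1 then -a k else 0)) * W' k (j : ℕ)) d
  rw [lhs, rhs, main (i : ℕ) (j : ℕ) i.isLt j.isLt]
end
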